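/- Let G be a finite group and H₁, H₂ almost conjugate subgroups, let G^∞ = ∏_{i∈ℕ} G, and let K₁ = H₁ × H₂ × H₂ × ⋯ and K₂ = H₂ × H₁ × H₂ × H₂ × ⋯ (differing from K₁ only in the first two coordinates). Then for any g₁,…,gₙ ∈ G^∞, the sets F(K₁, g₁⋯gₙ) and F(K₂, g₁⋯gₙ) have the same cardinality, where F(K, g) = {Kδ : δ ∈ G^∞, Kδg = Kδ}. -/
import Mathlib

/-- The right coset Λδ of a subgroup Λ. -/
def rcoset {Γ : Type*} [Group Γ] (Λ : Subgroup Γ) (δ : Γ) : Set Γ :=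
  {x | ∃ l ∈ Λ, x = l * δ}

/-- F(Λ,γ) = {Λδ : δ ∈ Γ, Λδγ = Λδ}, a set of right cosets of Λ. -/
def Fset {Γ : Type*} [Group Γ] (Λ : Subgroup Γ) (γ : Γ) : Set (Set Γ) :=
  {s | ∃ δ : Γ, s = rcoset Λ δ ∧ rcoset Λ (δ * γ) = rcoset Λ δ}

/-- Two subgroups are almost conjugate if every conjugacy class meets them
in the same number of elements. -/
def AlmostConj {G : Type*} [Group G] (H₁ H₂ : Subgroup G) : Prop :=
  ∀ g : G, Nat.card {x : G | IsConj g x ∧ x ∈ H₁} =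
    Nat.card {x : G | IsConj g x ∧ x ∈ H₂}

section Basic

variable {Γ : Type*} [Group Γ]

lemma self_mem_rcoset (Λ : Subgroup Γ) (δ : Γ) : δ ∈ rcoset Λ δ :=
  ⟨1, Λ.one_mem, (one_mul δ).symm⟩

lemma mem_rcoset_iff (Λ : Subgroup Γ) (δ x : Γ) : x ∈ rcoset Λ δ ↔ x * δ⁻¹ ∈ Λ := by
  constructor
  · rintro ⟨l, hl, rfl⟩; simpa using hl
  · intro h; exact ⟨x * δ⁻¹, h, by group⟩

lemma rcoset_eq_iff (Λ : Subgroup Γ) (a b : Γ) :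
    rcoset Λ a = rcoset Λ b ↔ a * b⁻¹ ∈ Λ := by
  constructor
  · intro h
    have := self_mem_rcoset Λ a
    rw [h, mem_rcoset_iff] at this; exact this
  · intro h
    ext x
    rw [mem_rcoset_iff, mem_rcoset_iff]
    constructor
    · intro hx
      have h2 := Λ.mul_mem hx h
      have h3 : x * a⁻¹ * (a * b⁻¹) = x * b⁻¹ := by group
      rwa [h3] at h2
    · intro hx
      have h2 := Λ.mul_mem hx (Λ.inv_mem h)
      have h3 : x * b⁻¹ * (a * b⁻¹)⁻¹ = x * a⁻¹ := by group
      rwa [h3] at h2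

lemma mem_Fset_iff (Λ : Subgroup Γ) (γ : Γ) (s : Set Γ) :
    s ∈ Fset Λ γ ↔ ∃ δ : Γ, s = rcoset Λ δ ∧ δ * γ * δ⁻¹ ∈ Λ := by
  simp only [Fset, Set.mem_setOf_eq, rcoset_eq_iff]

end Basic

section Counting

variable {G : Type*} [Group G] [Finite G]

/-- If all fibers of `f` on `s` have size `k`, then `s.card = (s.image f).card * k`. -/
lemma helper_card {α β : Type*} [DecidableEq β] (s : Finset α) (f : α → β)
    (k : ℕ) (hk : ∀ a ∈ s, (s.filter fun b => f b = f a).card = k) :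
    s.card = (s.image f).card * k := by
  classical
  rw [Finset.card_eq_sum_card_fiberwise (fun x hx => Finset.mem_image_of_mem f hx)]
  rw [Finset.sum_congr rfl (fun b hb => ?_), Finset.sum_const, smul_eq_mul]
  obtain ⟨a, ha, rfl⟩ := Finset.mem_image.mp hb
  exact hk a ha

lemma card_subgroup_eq {H₁ H₂ : Subgroup G} (hac : AlmostConj H₁ H₂) :
    Nat.card H₁ = Nat.card H₂ := by
  have _i := Fintype.ofFinite G
  classical
  have key : ∀ H : Subgroup G, Nat.card H =
      ∑ c : ConjClasses G, Nat.card {x : G | IsConj c.out x ∧ x ∈ H} := by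
    intro H
    have h1 : Nat.card H = (Finset.univ.filter (· ∈ H)).card := by
      rw [Nat.card_eq_fintype_card]
      exact Fintype.card_subtype _
    rw [h1, Finset.card_eq_sum_card_fiberwise
      (f := fun y => ConjClasses.mk y) (t := Finset.univ) (fun x _ => Finset.mem_univ _)]
    refine Finset.sum_congr rfl fun c _ => ?_
    have h2 : Nat.card {x : G | IsConj c.out x ∧ x ∈ H} =
        (Finset.univ.filter (fun x => IsConj c.out x ∧ x ∈ H)).card := by
      rw [Nat.card_eq_fintype_card]
      exact Fintype.card_subtype _
    rw [h2]
    apply Finset.card_bij (fun x _ => x)  -- identity on elements, same sets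
    · intro x hx
      simp only [Finset.mem_filter, Finset.mem_univ, true_and] at hx ⊢
      exact ⟨(ConjClasses.mk_eq_mk_iff_isConj).mp ((Quotient.out_eq c).trans hx.2.symm), hx.1⟩
    · intro a b _ _ h; exact h
    · intro b hb
      simp only [Finset.mem_filter, Finset.mem_univ, true_and] at hb
      refine ⟨b, ?_, rfl⟩
      simp only [Finset.mem_filter, Finset.mem_univ, true_and]
      refine ⟨hb.2, ?_⟩
      rw [← Quotient.out_eq c]
      exact (ConjClasses.mk_eq_mk_iff_isConj).mpr hb.1.symm
  rw [key H₁, key H₂]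
  exact Finset.sum_congr rfl fun c _ => hac c.out

lemma card_fix_mul (H : Subgroup G) (x : G) :
    Nat.card (Fset H x) * Nat.card H = Nat.card {δ : G | δ * x * δ⁻¹ ∈ H} := by
  have _i := Fintype.ofFinite G
  classical
  set D : Finset G := Finset.univ.filter (fun δ => δ * x * δ⁻¹ ∈ H) with hD
  have h1 : Nat.card {δ : G | δ * x * δ⁻¹ ∈ H} = D.card := by
    rw [Nat.card_eq_fintype_card]; exact Fintype.card_subtype _
  have h2 : Fset H x = ↑(D.image (rcoset H)) := by
    ext s
    simp only [mem_Fset_iff, Finset.coe_image, Set.mem_image, Finset.mem_coe,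
      Finset.mem_filter, Finset.mem_univ, true_and, hD]
    constructor
    · rintro ⟨δ, rfl, hδ⟩; exact ⟨δ, hδ, rfl⟩
    · rintro ⟨δ, hδ, rfl⟩; exact ⟨δ, rfl, hδ⟩
  have h3 : Nat.card (Fset H x) = (D.image (rcoset H)).card := by
    rw [h2, Nat.card_coe_set_eq, Set.ncard_coe_finset]
  have h4 : Nat.card H = (Finset.univ.filter (· ∈ H)).card := by
    rw [Nat.card_eq_fintype_card]; exact Fintype.card_subtype _
  rw [h1, h3, h4]
  refine (helper_card D (rcoset H) _ fun δ₀ hδ₀ => ?_).symm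
  simp only [hD, Finset.mem_filter, Finset.mem_univ, true_and] at hδ₀
  have hset : (D.filter fun δ => rcoset H δ = rcoset H δ₀) =
      Finset.univ.filter (fun δ => δ * δ₀⁻¹ ∈ H) := by
    ext δ
    simp only [Finset.mem_filter, Finset.mem_univ, true_and, hD, rcoset_eq_iff]
    constructor
    · rintro ⟨_, h⟩; exact h
    · intro h
      refine ⟨?_, h⟩
      have : (δ * δ₀⁻¹) * (δ₀ * x * δ₀⁻¹) * (δ * δ₀⁻¹)⁻¹ ∈ H :=
        H.mul_mem (H.mul_mem h hδ₀) (H.inv_mem h)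
      have heq : (δ * δ₀⁻¹) * (δ₀ * x * δ₀⁻¹) * (δ * δ₀⁻¹)⁻¹ = δ * x * δ⁻¹ := by group
      rwa [heq] at this
  rw [hset]
  refine Finset.card_equiv (Equiv.mulRight δ₀⁻¹) fun δ => ?_
  simp [Finset.mem_filter]

lemma card_fix_eq_conj (H : Subgroup G) (x : G) :
    Nat.card {δ : G | δ * x * δ⁻¹ ∈ H} =
      Nat.card {y : G | IsConj x y ∧ y ∈ H} * Nat.card (Subgroup.centralizer {x}) := by
  have _i := Fintype.ofFinite G
  classical
  set D : Finset G := Finset.univ.filter (fun δ => δ * x * δ⁻¹ ∈ H) with hD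
  have h1 : Nat.card {δ : G | δ * x * δ⁻¹ ∈ H} = D.card := by
    rw [Nat.card_eq_fintype_card]; exact Fintype.card_subtype _
  have h2 : Nat.card {y : G | IsConj x y ∧ y ∈ H} =
      (D.image (fun δ => δ * x * δ⁻¹)).card := by
    have : {y : G | IsConj x y ∧ y ∈ H} = ↑(D.image (fun δ => δ * x * δ⁻¹)) := by
      ext y
      simp only [Set.mem_setOf_eq, Finset.coe_image, Set.mem_image, Finset.mem_coe,
        Finset.mem_filter, Finset.mem_univ, true_and, hD]
      constructor
      · rintro ⟨hc, hy⟩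
        obtain ⟨c, hc⟩ := isConj_iff.mp hc
        exact ⟨c, by rwa [hc], hc⟩
      · rintro ⟨δ, hδ, rfl⟩
        exact ⟨isConj_iff.mpr ⟨δ, rfl⟩, hδ⟩
    rw [this, Nat.card_coe_set_eq, Set.ncard_coe_finset]
  have h4 : Nat.card (Subgroup.centralizer ({x} : Set G)) =
      (Finset.univ.filter (· ∈ Subgroup.centralizer ({x} : Set G))).card := by
    rw [Nat.card_eq_fintype_card]; exact Fintype.card_subtype _
  rw [h1, h2, h4]
  refine helper_card D (fun δ => δ * x * δ⁻¹) _ fun δ₀ hδ₀ => ?_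
  simp only [hD, Finset.mem_filter, Finset.mem_univ, true_and] at hδ₀
  have hset : (D.filter fun δ => δ * x * δ⁻¹ = δ₀ * x * δ₀⁻¹) =
      Finset.univ.filter (fun δ => δ₀⁻¹ * δ ∈ Subgroup.centralizer ({x} : Set G)) := by
    ext δ
    simp only [Finset.mem_filter, Finset.mem_univ, true_and, hD,
      Subgroup.mem_centralizer_singleton_iff]
    constructor
    · rintro ⟨_, h⟩
      have : δ₀⁻¹ * (δ * x * δ⁻¹) * δ₀ = δ₀⁻¹ * (δ₀ * x * δ₀⁻¹) * δ₀ := by rw [h]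
      have h2 : δ₀⁻¹ * (δ₀ * x * δ₀⁻¹) * δ₀ = x := by group
      rw [h2] at this
      calc δ₀⁻¹ * δ * x = δ₀⁻¹ * (δ * x * δ⁻¹) * δ₀ * (δ₀⁻¹ * δ) := by group
        _ = x * (δ₀⁻¹ * δ) := by rw [this]
    · intro h
      have key : δ * x * δ⁻¹ = δ₀ * x * δ₀⁻¹ := by
        have : δ₀ * ((δ₀⁻¹ * δ) * x) * δ⁻¹ = δ₀ * (x * (δ₀⁻¹ * δ)) * δ⁻¹ := by rw [h]
        calc δ * x * δ⁻¹ = δ₀ * ((δ₀⁻¹ * δ) * x) * δ⁻¹ := by group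
          _ = δ₀ * (x * (δ₀⁻¹ * δ)) * δ⁻¹ := by rw [h]
          _ = δ₀ * x * δ₀⁻¹ * (δ * δ⁻¹) := by group
          _ = δ₀ * x * δ₀⁻¹ := by group
      exact ⟨by rw [key]; exact hδ₀, key⟩
  rw [hset]
  refine Finset.card_equiv (Equiv.mulLeft δ₀⁻¹) fun δ => ?_
  simp [Finset.mem_filter]

lemma card_Fset_eq {H₁ H₂ : Subgroup G} (hac : AlmostConj H₁ H₂) (x : G) :
    Nat.card (Fset H₁ x) = Nat.card (Fset H₂ x) := by
  have h1 := card_fix_mul H₁ x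
  have h2 := card_fix_mul H₂ x
  rw [card_fix_eq_conj] at h1 h2
  rw [hac x, card_subgroup_eq hac] at h1
  have hpos : 0 < Nat.card H₂ := Nat.card_pos
  exact Nat.eq_of_mul_eq_mul_right hpos (h1.trans h2.symm)

end Counting

section PiEquiv

lemma Fset_pi_equiv {G : Type*} [Group G] (Λ : ℕ → Subgroup G) (γ : ℕ → G) :
    Nonempty ((Fset (Subgroup.pi Set.univ Λ) γ) ≃ ∀ i, Fset (Λ i) (γ i)) := by
  classical
  set K := Subgroup.pi Set.univ Λ with hK
  have memK : ∀ a : ℕ → G, a ∈ K ↔ ∀ i, a i ∈ Λ i := by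
    intro a; simp [hK, Subgroup.mem_pi]
  have hrep : ∀ s : Fset K γ, ∃ δ : ℕ → G,
      (s : Set (ℕ → G)) = rcoset K δ ∧ δ * γ * δ⁻¹ ∈ K :=
    fun s => (mem_Fset_iff K γ s).mp s.2
  choose rep hrep1 hrep2 using hrep
  refine ⟨Equiv.ofBijective (fun s i => ⟨rcoset (Λ i) (rep s i), ?_⟩) ⟨?_, ?_⟩⟩
  · rw [mem_Fset_iff]
    exact ⟨rep s i, rfl, (memK _).mp (hrep2 s) i⟩
  · intro s t hst
    have hco : ∀ i, rcoset (Λ i) (rep s i) = rcoset (Λ i) (rep t i) := by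
      intro i
      have := congrFun hst i
      exact Subtype.ext_iff.mp this
    have : rep s * (rep t)⁻¹ ∈ K := by
      rw [memK]
      intro i
      exact (rcoset_eq_iff _ _ _).mp (hco i)
    have hKeq : rcoset K (rep s) = rcoset K (rep t) := (rcoset_eq_iff _ _ _).mpr this
    apply Subtype.ext
    rw [hrep1 s, hrep1 t, hKeq]
  · intro t
    have ht : ∀ i, ∃ d : G, (t i : Set G) = rcoset (Λ i) d ∧ d * γ i * d⁻¹ ∈ Λ i :=
      fun i => (mem_Fset_iff _ _ _).mp (t i).2
    choose d hd1 hd2 using ht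
    have hs₀ : rcoset K d ∈ Fset K γ := by
      rw [mem_Fset_iff]
      exact ⟨d, rfl, (memK _).mpr hd2⟩
    refine ⟨⟨rcoset K d, hs₀⟩, ?_⟩
    funext i
    apply Subtype.ext
    have heq : rcoset K d = rcoset K (rep ⟨rcoset K d, hs₀⟩) := hrep1 ⟨rcoset K d, hs₀⟩
    have hmem : d * (rep ⟨rcoset K d, hs₀⟩)⁻¹ ∈ K := (rcoset_eq_iff _ _ _).mp heq
    have : rcoset (Λ i) (rep ⟨rcoset K d, hs₀⟩ i) = rcoset (Λ i) (d i) :=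
      ((rcoset_eq_iff _ _ _).mpr ((memK _).mp hmem i)).symm
    show rcoset (Λ i) (rep ⟨rcoset K d, hs₀⟩ i) = (t i : Set G)
    rw [this, hd1 i]

end PiEquiv

/-- For almost conjugate H₁, H₂ ≤ G, the subgroups K₁ = H₁ × H₂ × H₂ × ⋯ and
K₂ = H₂ × H₁ × H₂ × ⋯ of G^∞ satisfy |F(K₁, g₁⋯gₙ)| = |F(K₂, g₁⋯gₙ)| for all
g₁,…,gₙ ∈ G^∞ (the two sets of cosets are in bijection). -/
theorem Fset_equiv_of_swapped_product {G : Type*} [Group G] [Finite G]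
    (H₁ H₂ : Subgroup G) (hac : AlmostConj H₁ H₂)
    (n : ℕ) (g : Fin n → (ℕ → G)) :
    Nonempty
      (Fset (Subgroup.pi Set.univ fun i : ℕ => if i = 0 then H₁ else H₂)
          ((List.ofFn g).prod) ≃
        Fset (Subgroup.pi Set.univ fun i : ℕ => if i = 1 then H₁ else H₂)
          ((List.ofFn g).prod)) := by
  classical
  set γ : ℕ → G := (List.ofFn g).prod with hγ
  obtain ⟨e₁⟩ := Fset_pi_equiv (fun i : ℕ => if i = 0 then H₁ else H₂) γ
  obtain ⟨e₂⟩ := Fset_pi_equiv (fun i : ℕ => if i = 1 then H₁ else H₂) γ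
  have hac' : AlmostConj H₂ H₁ := fun x => (hac x).symm
  have hcoord : ∀ i : ℕ,
      Nonempty ((Fset (if i = 0 then H₁ else H₂) (γ i)) ≃
        (Fset (if i = 1 then H₁ else H₂) (γ i))) := by
    intro i
    rcases eq_or_ne i 0 with rfl | h0
    · simp only [if_pos rfl, if_neg (by norm_num : ¬(0 : ℕ) = 1)]
      exact Finite.card_eq.mp (card_Fset_eq hac _)
    rcases eq_or_ne i 1 with rfl | h1
    · simp only [if_pos rfl, if_neg (by norm_num : ¬(1 : ℕ) = 0)]
      exact Finite.card_eq.mp (card_Fset_eq hac' _)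
    · simp only [if_neg h0, if_neg h1]
      exact ⟨Equiv.refl _⟩
  exact ⟨e₁.trans ((Equiv.piCongrRight fun i => (hcoord i).some).trans e₂.symm)⟩
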